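/- arXiv:math/9707235 — 3 statements merged into one kernel-verified Lean document; each statement's English description precedes it below -/
import Mathlib

section
/- Let p be an odd prime, N ≥ 1, k ≥ 2 integers, and let N_k = min(N, 1 + v_p(k−1)). For every polynomial P ∈ ℤ_p[X] with P(p) ≡ 0 (mod p^N), one has P((1+p)^k − 1) ≡ 0 (mod p^{N_k}). -/
/-!
Write `(1+p)^k - 1 = p + (1+p)((1+p)^(k-1) - 1)`. By lifting the exponent,
`v_p((1+p)^(k-1) - 1) = 1 + v_p(k-1)`, so `(1+p)^k - 1 ≡ p (mod p^{1 + v_p(k-1)})`.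
Since `x - y ∣ P(x) - P(y)`, the value `P((1+p)^k - 1)` is congruent to `P(p)` modulo
`p^{N_k}`, and `P(p)` vanishes modulo `p^N`, hence modulo `p^{N_k}`.
-/

namespace Polynomial

theorem dvd_eval_of_dvd_sub {R : Type*} [CommRing R] {a x y : R} (P : R[X])
    (hxy : a ∣ x - y) (hy : a ∣ P.eval y) : a ∣ P.eval x := by
  simpa using dvd_add (hxy.trans (sub_dvd_eval_sub x y P)) hy

end Polynomial

section OnePlusPrime

variable {p : ℕ} [Fact p.Prime]

theorem padicValNat_one_add_pow_sub_one (hp : Odd p) {m : ℕ} (hm : m ≠ 0) :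
    padicValNat p ((1 + p) ^ m - 1) = 1 + padicValNat p m := by
  have hp1 : 1 < p := (Fact.out : p.Prime).one_lt
  have hlte := padicValNat.pow_sub_pow (y := 1) (x := 1 + p) hp (by omega) (by simp)
    (by simpa [Nat.dvd_add_right (dvd_refl p)] using (Fact.out : p.Prime).not_dvd_one) hm
  simpa using hlte

theorem pow_dvd_one_add_pow_sub_one_sub_self {R : Type*} [CommRing R] (hp : Odd p) {k : ℕ}
    (hk : k ≠ 0) :
    (p : R) ^ (1 + padicValNat p (k - 1)) ∣ (1 + p) ^ k - 1 - p := by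
  obtain ⟨m, rfl⟩ := Nat.exists_eq_add_one_of_ne_zero hk
  obtain rfl | hm := eq_or_ne m 0
  · simp
  have hnat : p ^ (1 + padicValNat p m) ∣ (1 + p) ^ m - 1 :=
    padicValNat_one_add_pow_sub_one hp hm ▸ pow_padicValNat_dvd
  have hcast : (p : R) ^ (1 + padicValNat p m) ∣ (1 + p) ^ m - 1 := by
    simpa [Nat.cast_sub (Nat.one_le_pow _ (1 + p) (by omega))]
      using Nat.cast_dvd_cast (α := R) hnat
  have hsplit : ((1 + p) ^ (m + 1) - 1 - p : R) = (1 + p) * ((1 + p) ^ m - 1) := by ring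
  simpa [hsplit] using hcast.mul_left (1 + (p : R))

end OnePlusPrime

theorem padic_poly_congruence_general (p N k : ℕ) [Fact p.Prime] (hp : Odd p)
    (hk : 2 ≤ k) (P : Polynomial ℤ_[p])
    (hP : (p : ℤ_[p]) ^ N ∣ P.eval (p : ℤ_[p])) :
    (p : ℤ_[p]) ^ (min N (1 + padicValNat p (k - 1))) ∣
      P.eval ((1 + (p : ℤ_[p])) ^ k - 1) := by
  have hshift : (p : ℤ_[p]) ^ (1 + padicValNat p (k - 1)) ∣ (1 + p) ^ k - 1 - p :=
    pow_dvd_one_add_pow_sub_one_sub_self hp (by omega)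
  exact P.dvd_eval_of_dvd_sub ((pow_dvd_pow _ (min_le_right _ _)).trans hshift)
    ((pow_dvd_pow _ (min_le_left _ _)).trans hP)

/-- Let `p` be an odd prime, `N ≥ 1`, `k ≥ 2`, and `N_k = min(N, 1 + v_p(k-1))`.
For every polynomial `P ∈ ℤ_p[X]` with `P(p) ≡ 0 (mod p^N)`, one has
`P((1+p)^k - 1) ≡ 0 (mod p^{N_k})`. -/
theorem padic_poly_congruence (p N k : ℕ) [Fact p.Prime] (hp : Odd p)
    (hN : 1 ≤ N) (hk : 2 ≤ k) (P : Polynomial ℤ_[p])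
    (hP : (p : ℤ_[p]) ^ N ∣ P.eval (p : ℤ_[p])) :
    (p : ℤ_[p]) ^ (min N (1 + padicValNat p (k - 1))) ∣
      P.eval ((1 + (p : ℤ_[p])) ^ k - 1) :=
  padic_poly_congruence_general p N k hp hk P hP
end

section
/- Let p be an odd prime, N ≥ 1, k ≥ 2, and N_k = min(N, 1 + v_p(k−1)). There exists a polynomial P ∈ ℤ_p[X] of degree at most N with P(p) ≡ 0 (mod p^N) but P((1+p)^k − 1) ≢ 0 (mod p^{N_k + 1}). -/
/-!
By lifting the exponent, `v_p((1 + p)^m - 1) = 1 + v_p(m)` for odd `p`. If `1 + v_p(k - 1) ≤ N`,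
take `P = X - p`: then `P((1 + p)^k - 1) = (1 + p)((1 + p)^(k - 1) - 1)` has valuation
`1 + v_p(k - 1) = N_k`, as `1 + p` is a unit. Otherwise `p ∣ k - 1`, so `p ∤ k`, and
`P = p^(N - 1) X` takes at `(1 + p)^k - 1` a value of valuation `N - 1 + 1 + v_p(k) = N = N_k`.
-/

open Polynomial

variable {p : ℕ} [Fact p.Prime]

theorem padicValNat_one_add_self_pow_sub_one (hp : Odd p) {n : ℕ} (hn : n ≠ 0) :
    padicValNat p ((1 + p) ^ n - 1) = 1 + padicValNat p n := by
  have hnd : ¬p ∣ 1 + p := by simp [Nat.dvd_one, (Fact.out : p.Prime).ne_one]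
  simpa using padicValNat.pow_sub_pow hp (show 1 < 1 + p by have := hp.pos; omega) (by simp) hnd hn

theorem padicValNat_eq_zero_of_dvd_sub_one {k : ℕ} (h : p ∣ k - 1) : padicValNat p k = 0 := by
  rcases Nat.eq_zero_or_pos k with rfl | hk
  · simp
  refine padicValNat.eq_zero_of_not_dvd fun hpk => (Fact.out : p.Prime).ne_one ?_
  simpa [Nat.sub_sub_self hk] using Nat.dvd_sub hpk h

namespace PadicInt

theorem isUnit_one_add_p : IsUnit (1 + (p : ℤ_[p])) := by
  have hneg : -(p : ℤ_[p]) ∈ nonunits ℤ_[p] := by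
    rw [mem_nonunits, norm_neg, ← mem_nonunits]
    exact p_nonunit
  simpa using IsLocalRing.isUnit_one_sub_self_of_mem_nonunits _ hneg

theorem not_pow_dvd_one_add_p_pow_sub_one (hp : Odd p) {n : ℕ} (hn : n ≠ 0) :
    ¬ (p : ℤ_[p]) ^ (padicValNat p n + 2) ∣ (1 + (p : ℤ_[p])) ^ n - 1 := by
  have hcast : (1 + (p : ℤ_[p])) ^ n - 1 = (((1 + p) ^ n - 1 : ℕ) : ℤ) := by
    rw [Int.cast_natCast, Nat.cast_sub (Nat.one_le_pow _ _ (by omega))]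
    push_cast; rfl
  rw [hcast, pow_p_dvd_int_iff, ← Int.natCast_pow, Int.natCast_dvd_natCast]
  have hne : (1 + p) ^ n - 1 ≠ 0 := by
    have := Nat.one_lt_pow hn (show 1 < 1 + p by have := hp.pos; omega)
    omega
  have := pow_succ_padicValNat_not_dvd (p := p) hne
  rwa [padicValNat_one_add_self_pow_sub_one hp hn, add_comm 1, add_assoc] at this

theorem not_pow_dvd_one_add_p_pow_sub_one_sub_p (hp : Odd p) {k : ℕ} (hk : 2 ≤ k) :
    ¬ (p : ℤ_[p]) ^ (1 + padicValNat p (k - 1) + 1) ∣ (1 + (p : ℤ_[p])) ^ k - 1 - p := by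
  have hfactor : (1 + (p : ℤ_[p])) ^ k - 1 - p = (1 + p) * ((1 + p) ^ (k - 1) - 1) := by
    conv_lhs => rw [← Nat.sub_add_cancel (show 1 ≤ k by omega)]
    ring
  rw [hfactor, isUnit_one_add_p.dvd_mul_left, add_comm 1, add_assoc]
  exact not_pow_dvd_one_add_p_pow_sub_one hp (by omega)

theorem not_pow_dvd_p_pow_mul_one_add_p_pow_sub_one (hp : Odd p) {N k : ℕ} (hN : 1 ≤ N)
    (hk : k ≠ 0) (hpk : p ∣ k - 1) :
    ¬ (p : ℤ_[p]) ^ (N + 1) ∣ (p : ℤ_[p]) ^ (N - 1) * ((1 + (p : ℤ_[p])) ^ k - 1) := by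
  have hp0 : (p : ℤ_[p]) ^ (N - 1) ≠ 0 :=
    pow_ne_zero _ (Nat.cast_ne_zero.mpr (Fact.out : p.Prime).ne_zero)
  rw [show N + 1 = N - 1 + 2 by omega, pow_add, mul_dvd_mul_iff_left hp0]
  simpa [padicValNat_eq_zero_of_dvd_sub_one hpk] using not_pow_dvd_one_add_p_pow_sub_one hp hk

end PadicInt

/-- Let `p` be an odd prime, `N ≥ 1`, `k ≥ 2`, and `N_k = min(N, 1 + v_p(k-1))`.
There exists a polynomial `P ∈ ℤ_p[X]` of degree at most `N` with `P(p) ≡ 0 (mod p^N)`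
but `P((1+p)^k - 1) ≢ 0 (mod p^{N_k + 1})`. -/
theorem padic_poly_sharp (p N k : ℕ) [Fact p.Prime] (hp : Odd p)
    (hN : 1 ≤ N) (hk : 2 ≤ k) :
    ∃ P : Polynomial ℤ_[p], P.natDegree ≤ N ∧
      (p : ℤ_[p]) ^ N ∣ P.eval (p : ℤ_[p]) ∧
      ¬ (p : ℤ_[p]) ^ (min N (1 + padicValNat p (k - 1)) + 1) ∣
          P.eval ((1 + (p : ℤ_[p])) ^ k - 1) := by
  rcases le_or_gt (1 + padicValNat p (k - 1)) N with hle | hlt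
  · refine ⟨X - C (p : ℤ_[p]), by rwa [natDegree_X_sub_C], by simp, ?_⟩
    rw [min_eq_right hle, eval_sub, eval_X, eval_C]
    exact PadicInt.not_pow_dvd_one_add_p_pow_sub_one_sub_p hp hk
  · refine ⟨C ((p : ℤ_[p]) ^ (N - 1)) * X,
      (natDegree_C_mul_le _ X).trans (natDegree_X_le.trans hN), ?_, ?_⟩
    · rw [eval_mul, eval_C, eval_X, ← pow_succ, Nat.sub_add_cancel hN]
    · rw [min_eq_left hlt.le, eval_mul, eval_C, eval_X]
      exact PadicInt.not_pow_dvd_p_pow_mul_one_add_p_pow_sub_one hp hN (by omega)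
        (dvd_of_one_le_padicValNat (by omega))
end

section
/- Let p be an odd prime, K = ℚ_p(ζ_p) with ζ_p a primitive p-th root of unity, Δ = Gal(K/ℚ_p) ≅ (ℤ/p)^× with cyclotomic character ω. For 1 ≤ t ≤ p−2, the Gauss sum G(t) = (1/(p−1)) Σ_{σ∈Δ} ω^{−t}(σ) ζ_p^σ (where ω^{-t}(σ) is lifted to ℤ_p via Teichmüller) satisfies v_𝔓(G(t)) = t, where 𝔓 = (ζ_p − 1) is the maximal ideal of the ring of integers of K and v_𝔓 is the normalized valuation with v_𝔓(ζ_p − 1) = 1. -/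
/-!
Write `π = ζ - 1` and `σ ζ = (1 + π) ^ aσ`, where `0 ≤ aσ < p` represents `ω σ mod p`. Expanding
binomially, the numerator of `G(t)` is `∑ₖ Aₖ πᵏ` with `Aₖ = ∑_σ ω(σ)⁻ᵗ (aσ choose k) ∈ ℤ_p`.
Since `σ ↦ ω σ mod p` is a bijection `Δ ≃ (ℤ/p)ˣ` and `k! (a choose k)` is a polynomial of degree
`k` in `a`, orthogonality of the characters of `(ℤ/p)ˣ` gives `Aₖ ≡ 0 mod p` for `k < t` and
`t! A_t ≡ -1 mod p`. As `‖p‖ = ‖π‖ ^ (p - 1)` and `t < p - 1`, the term `A_t πᵗ` strictly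
dominates all the others, while `p - 1` is a unit.
-/

open Polynomial Nat

theorem Polynomial.irreducible_cyclotomic_comp_X_add_one_of_prime {R : Type*} [CommRing R]
    [IsDomain R] {p : ℕ} [Fact p.Prime] (hp : Prime (p : R)) :
    Irreducible ((cyclotomic p R).comp (X + 1)) := by
  have hX : (X + 1 : R[X]) = X + C 1 := by simp
  have hmonic : ((cyclotomic p R).comp (X + 1)).Monic := by
    rw [hX]
    exact (cyclotomic.monic p R).comp (monic_X_add_C 1) (by rw [natDegree_X_add_C]; simp)
  have hmap : (cyclotomic p R).comp (X + 1) =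
      ((cyclotomic p ℤ).comp (X + 1)).map (Int.castRingHom R) := by
    rw [Polynomial.map_comp, map_cyclotomic]
    simp
  have hdeg : ((cyclotomic p R).comp (X + 1)).natDegree = p - 1 := by
    rw [hX, natDegree_comp, natDegree_X_add_C, natDegree_cyclotomic, Nat.totient_prime Fact.out,
      mul_one]
  have hEis : ((cyclotomic p R).comp (X + 1)).IsEisensteinAt (Ideal.span {(p : R)}) := by
    refine hmonic.isEisensteinAt_of_mem_of_notMem
      ((Ideal.span_singleton_prime hp.ne_zero).2 hp).ne_top (fun {n} hn => ?_) ?_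
    · have hnZ : n < ((cyclotomic p ℤ).comp (X + 1)).natDegree :=
        hn.trans_le (hmap ▸ natDegree_map_le)
      obtain ⟨c, hc⟩ := Ideal.mem_span_singleton'.1 <|
        (cyclotomic_comp_X_add_one_isEisensteinAt p).mem hnZ
      rw [hmap, coeff_map, ← hc, Ideal.mem_span_singleton]
      exact ⟨c, by simp [mul_comm]⟩
    · rw [coeff_zero_eq_eval_zero, eval_comp]
      simp only [eval_add, eval_X, eval_one, zero_add, eval_one_cyclotomic_prime]
      rw [Ideal.span_singleton_pow, Ideal.mem_span_singleton, pow_two]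
      exact fun h => hp.not_isUnit <| isUnit_of_dvd_one <|
        (mul_dvd_mul_iff_left hp.ne_zero).1 (by simpa using h)
  exact hEis.irreducible ((Ideal.span_singleton_prime hp.ne_zero).2 hp) hmonic.isPrimitive
    (by rw [hdeg]; have := (Fact.out : p.Prime).two_le; omega)

theorem Polynomial.irreducible_cyclotomic_of_prime {R : Type*} (K : Type*) [CommRing R]
    [IsDomain R] [IsIntegrallyClosed R] [Field K] [Algebra R K] [IsFractionRing R K] {p : ℕ}
    [Fact p.Prime] (hp : Prime (p : R)) : Irreducible (cyclotomic p K) := by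
  have h := irreducible_cyclotomic_comp_X_add_one_of_prime hp
  rw [show (X + 1 : R[X]) = X + C 1 by simp, comp_eq_aeval] at h
  rw [← map_cyclotomic p (algebraMap R K)]
  exact (cyclotomic.monic p R).irreducible_iff_irreducible_map_fraction_map.1 <|
    (MulEquiv.irreducible_iff (algEquivAevalXAddC (1 : R))).1 h

theorem IsPrimitiveRoot.autToPow_bijective {n : ℕ} [NeZero n] {K L : Type*} [Field K] [Field L]
    [Algebra K L] [IsCyclotomicExtension {n} K L] {μ : L} (hμ : IsPrimitiveRoot μ n)
    (hirr : Irreducible (cyclotomic n K)) : Function.Bijective (hμ.autToPow K) := by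
  have := IsCyclotomicExtension.finiteDimensional {n} K L
  have := IsCyclotomicExtension.isGalois {n} K L
  refine (hμ.autToPow_injective K).bijective_of_nat_card_le ?_
  rw [Nat.card_eq_fintype_card, ZMod.card_units_eq_totient, IsGalois.card_aut_eq_finrank,
    IsCyclotomicExtension.finrank L hirr]

theorem IsPrimitiveRoot.bijective_of_apply_eq_pow {n : ℕ} [NeZero n] {K L : Type*} [Field K]
    [Field L] [Algebra K L] [IsCyclotomicExtension {n} K L] {μ : L} (hμ : IsPrimitiveRoot μ n)
    (hirr : Irreducible (cyclotomic n K)) {m : (L ≃ₐ[K] L) → (ZMod n)ˣ}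
    (hm : ∀ σ, σ μ = μ ^ (m σ : ZMod n).val) : Function.Bijective m := by
  convert hμ.autToPow_bijective hirr
  ext σ
  exact ZMod.val_injective n <| hμ.pow_inj (ZMod.val_lt _) (ZMod.val_lt _) <|
    (hm σ).symm.trans (hμ.autToPow_spec K σ).symm

namespace FiniteField

variable {F : Type*} [Field F] [Fintype F] [DecidableEq F]

theorem sum_units_inv_pow_mul_pow {j t : ℕ} (hj : j ≤ t) (ht : t + 1 < Fintype.card F) :
    ∑ b : Fˣ, (b : F)⁻¹ ^ t * (b : F) ^ j = if j = t then -1 else 0 := by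
  have hsplit : ∀ b : Fˣ, (b : F)⁻¹ ^ t * (b : F) ^ j = ((b⁻¹ : Fˣ) : F) ^ (t - j) := by
    intro b
    rw [← Nat.sub_add_cancel hj, pow_add, mul_assoc, ← mul_pow, inv_mul_cancel₀ b.ne_zero,
      one_pow, mul_one, Nat.add_sub_cancel, Units.val_inv_eq_inv_val]
  rw [Fintype.sum_equiv (Equiv.inv Fˣ) _ (fun b => (b : F) ^ (t - j)) hsplit, sum_pow_units]
  by_cases hjt : j = t
  · simp [hjt]
  · rw [if_neg hjt, if_neg fun hdvd => hjt ?_]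
    have := Nat.eq_zero_of_dvd_of_lt hdvd (by omega)
    omega

theorem sum_units_inv_pow_mul_eval {f : F[X]} {t : ℕ} (hf : f.natDegree ≤ t)
    (ht : t + 1 < Fintype.card F) :
    ∑ b : Fˣ, (b : F)⁻¹ ^ t * f.eval (b : F) = -f.coeff t := by
  simp_rw [eval_eq_sum_range' (Nat.lt_succ_of_le hf), Finset.mul_sum]
  rw [Finset.sum_comm]
  simp_rw [mul_left_comm _ (f.coeff _), ← Finset.mul_sum]
  rw [Finset.sum_congr rfl fun j hj => by
    rw [sum_units_inv_pow_mul_pow (Nat.lt_succ_iff.1 (Finset.mem_range.1 hj)) ht]]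
  simp

end FiniteField

theorem ZMod.factorial_mul_sum_units_inv_pow_mul_choose {p : ℕ} [Fact p.Prime] {k t : ℕ}
    (hk : k ≤ t) (ht : t + 1 < p) :
    (k ! : ZMod p) * ∑ b : (ZMod p)ˣ, (b : ZMod p)⁻¹ ^ t * ((b : ZMod p).val.choose k : ZMod p) =
      if k = t then -1 else 0 := by
  have heval : ∀ b : (ZMod p)ˣ, (k ! : ZMod p) * ((b : ZMod p).val.choose k : ZMod p) =
      (descPochhammer (ZMod p) k).eval (b : ZMod p) := by
    intro b
    rw [← Nat.cast_mul, ← Nat.descFactorial_eq_factorial_mul_choose,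
      ← descPochhammer_eval_eq_descFactorial, ZMod.natCast_zmod_val]
  simp_rw [Finset.mul_sum, mul_left_comm _ ((_ : ZMod p) ^ t), heval]
  rw [FiniteField.sum_units_inv_pow_mul_eval (by rwa [descPochhammer_natDegree]) (by simpa)]
  rcases hk.eq_or_lt with rfl | hlt
  · have := (monic_descPochhammer (ZMod p) k).coeff_natDegree
    rw [descPochhammer_natDegree] at this
    rw [this, if_pos rfl]
  · rw [coeff_eq_zero_of_natDegree_lt (by rwa [descPochhammer_natDegree]), if_neg hlt.ne, neg_zero]

theorem add_one_pow_eq_sum_range_choose {R : Type*} [CommSemiring R] (x : R) {n N : ℕ}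
    (hn : n < N) : (x + 1) ^ n = ∑ k ∈ Finset.range N, (n.choose k : R) * x ^ k := by
  have hdeg : ((X + 1 : R[X]) ^ n).natDegree < N :=
    (natDegree_pow_le_of_le n (natDegree_add_le_of_degree_le natDegree_X_le
      (natDegree_one.trans_le zero_le_one))).trans_lt (by simpa using hn)
  simpa [coeff_X_add_one_pow] using eval_eq_sum_range' hdeg x

theorem Finset.sum_mul_add_one_pow {R ι : Type*} [CommSemiring R] (s : Finset ι) (c : ι → R)
    {a : ι → ℕ} (x : R) {N : ℕ} (ha : ∀ i ∈ s, a i < N) :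
    ∑ i ∈ s, c i * (x + 1) ^ a i =
      ∑ k ∈ Finset.range N, (∑ i ∈ s, c i * ((a i).choose k : R)) * x ^ k := by
  rw [Finset.sum_congr rfl fun i hi => by rw [add_one_pow_eq_sum_range_choose x (ha i hi)]]
  simp_rw [Finset.mul_sum, Finset.sum_mul, mul_assoc]
  exact Finset.sum_comm

theorem IsUltrametricDist.of_norm_algebraMap_eq {F L : Type*} [NormedField F]
    [IsUltrametricDist F] [NormedDivisionRing L] [Algebra F L]
    (h : ∀ x, ‖algebraMap F L x‖ = ‖x‖) : IsUltrametricDist L := by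
  refine IsUltrametricDist.isUltrametricDist_of_forall_norm_natCast_le_one fun n => ?_
  rw [← map_natCast (algebraMap F L), h]
  exact IsUltrametricDist.norm_natCast_le_one F n

section Ultrametric

variable {K : Type*} [NormedField K] [IsUltrametricDist K]

theorem IsUltrametricDist.norm_sub_one_eq_one {x : K} (hx : ‖x‖ < 1) : ‖x - 1‖ = 1 := by
  have hne : ‖x‖ ≠ ‖(-1 : K)‖ := by rw [norm_neg, norm_one]; exact hx.ne
  rw [sub_eq_add_neg, norm_add_eq_max_of_norm_ne_norm hne, norm_neg, norm_one, max_eq_right hx.le]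

theorem IsUltrametricDist.norm_pow_sub_one_le {x : K} (hx : ‖x‖ ≤ 1) (i : ℕ) :
    ‖x ^ i - 1‖ ≤ ‖x - 1‖ := by
  rw [← geom_sum_mul, norm_mul]
  refine mul_le_of_le_one_left (norm_nonneg _) ?_
  refine IsUltrametricDist.norm_sum_le_of_forall_le_of_nonneg zero_le_one fun j _ => ?_
  rw [norm_pow]
  exact pow_le_one₀ (norm_nonneg x) hx

theorem IsPrimitiveRoot.norm_sub_one_eq {n : ℕ} [NeZero n] {ζ μ : K} (hζ : IsPrimitiveRoot ζ n)
    (hμ : IsPrimitiveRoot μ n) : ‖μ - 1‖ = ‖ζ - 1‖ := by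
  have hnorm : ∀ {ξ : K}, IsPrimitiveRoot ξ n → ‖ξ‖ = 1 := fun h =>
    (isOfFinOrder_iff_pow_eq_one.2 ⟨n, NeZero.pos n, h.pow_eq_one⟩).norm_eq_one
  obtain ⟨i, -, rfl⟩ := hζ.eq_pow_of_pow_eq_one hμ.pow_eq_one
  obtain ⟨j, -, hj⟩ := hμ.eq_pow_of_pow_eq_one hζ.pow_eq_one
  refine le_antisymm (IsUltrametricDist.norm_pow_sub_one_le (hnorm hζ).le i) ?_
  calc ‖ζ - 1‖ = ‖(ζ ^ i) ^ j - 1‖ := by rw [hj]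
    _ ≤ ‖ζ ^ i - 1‖ := IsUltrametricDist.norm_pow_sub_one_le (hnorm hμ).le j

theorem IsPrimitiveRoot.norm_sub_one_pow_totient {n : ℕ} [NeZero n] {ζ : K}
    (hζ : IsPrimitiveRoot ζ n) : ‖ζ - 1‖ ^ n.totient = ‖(cyclotomic n K).eval 1‖ := by
  rw [cyclotomic_eq_prod_X_sub_primitiveRoots hζ, eval_prod, norm_prod,
    ← hζ.card_primitiveRoots, ← Finset.prod_const]
  refine Finset.prod_congr rfl fun μ hμ => ?_
  rw [eval_sub, eval_X, eval_C, norm_sub_rev 1 μ,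
    ((mem_primitiveRoots (NeZero.pos n)).1 hμ).norm_sub_one_eq hζ]

theorem IsUltrametricDist.norm_sum_eq_of_forall_norm_lt {ι : Type*} {s : Finset ι} {f : ι → K}
    {i : ι} (hi : i ∈ s) (h : ∀ j ∈ s, j ≠ i → ‖f j‖ < ‖f i‖) : ‖∑ j ∈ s, f j‖ = ‖f i‖ := by
  classical
  rw [← Finset.add_sum_erase s f hi]
  rcases (s.erase i).eq_empty_or_nonempty with hempty | hne
  · rw [hempty, Finset.sum_empty, add_zero]
  obtain ⟨j, hj, hle⟩ := IsUltrametricDist.exists_norm_finsetSum_le_of_nonempty hne f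
  have hlt := hle.trans_lt (h j (Finset.mem_of_mem_erase hj) (Finset.ne_of_mem_erase hj))
  rw [IsUltrametricDist.norm_add_eq_max_of_norm_ne_norm hlt.ne', max_eq_left hlt.le]

theorem IsUltrametricDist.norm_sum_range_mul_pow_eq {c : ℕ → K} {π : K} {N t : ℕ} (ht : t < N)
    (hπ0 : π ≠ 0) (hπ1 : ‖π‖ < 1) (hc : ∀ k, ‖c k‖ ≤ 1) (hct : ‖c t‖ = 1)
    (hlow : ∀ k < t, ‖c k‖ < ‖π‖ ^ (t - k)) :
    ‖∑ k ∈ Finset.range N, c k * π ^ k‖ = ‖π‖ ^ t := by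
  have hdom : ‖c t * π ^ t‖ = ‖π‖ ^ t := by rw [norm_mul, hct, one_mul, norm_pow]
  rw [← hdom]
  refine norm_sum_eq_of_forall_norm_lt (Finset.mem_range.2 ht) fun k _ hkt => ?_
  rw [hdom, norm_mul, norm_pow]
  rcases Nat.lt_or_gt_of_ne hkt with hlt | hgt
  · calc ‖c k‖ * ‖π‖ ^ k < ‖π‖ ^ (t - k) * ‖π‖ ^ k := by gcongr; exact hlow k hlt
      _ = ‖π‖ ^ t := by rw [← pow_add, Nat.sub_add_cancel hlt.le]
  · calc ‖c k‖ * ‖π‖ ^ k ≤ 1 * ‖π‖ ^ k := by gcongr; exact hc k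
      _ < ‖π‖ ^ t := by
        rw [one_mul]
        exact pow_lt_pow_right_of_lt_one₀ (norm_pos_iff.2 hπ0) hπ1 hgt

end Ultrametric

namespace PadicInt

variable {p : ℕ} [Fact p.Prime]

theorem toZMod_eq_zero_iff_norm_le {x : ℤ_[p]} : toZMod x = 0 ↔ ‖x‖ ≤ (p : ℝ)⁻¹ := by
  rw [← RingHom.mem_ker, ker_toZMod, maximalIdeal_eq_span_p, ← pow_one (p : ℤ_[p]),
    ← norm_le_pow_iff_mem_span_pow]
  simp

theorem norm_eq_one_iff_toZMod_ne_zero {x : ℤ_[p]} : ‖x‖ = 1 ↔ toZMod x ≠ 0 := by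
  rw [← isUnit_iff, Ne, ← RingHom.mem_ker, ker_toZMod, IsLocalRing.mem_maximalIdeal,
    mem_nonunits_iff, not_not]

end PadicInt

section GaussSum

variable {p : ℕ} [Fact p.Prime]

noncomputable def gaussCoeff {G : Type*} [Fintype G] (ω : G → ℤ_[p]ˣ) (t k : ℕ) : ℤ_[p] :=
  ∑ σ, ((ω σ)⁻¹ : ℤ_[p]ˣ) ^ t * ((PadicInt.toZMod (ω σ : ℤ_[p])).val.choose k : ℤ_[p])

variable {K : Type*} [Field K] [Algebra ℚ_[p] K] [FiniteDimensional ℚ_[p] K] {ζ : K}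
  {ω : (K ≃ₐ[ℚ_[p]] K) →* ℤ_[p]ˣ}

theorem sum_mul_apply_eq_sum_gaussCoeff_mul_pow
    (hω : ∀ σ : K ≃ₐ[ℚ_[p]] K, σ ζ = ζ ^ (PadicInt.toZMod ((ω σ : ℤ_[p]ˣ) : ℤ_[p])).val)
    (t : ℕ) :
    ∑ σ : K ≃ₐ[ℚ_[p]] K, algebraMap ℚ_[p] K (((((ω σ)⁻¹ : ℤ_[p]ˣ) : ℤ_[p]) : ℚ_[p]) ^ t) * σ ζ =
      ∑ k ∈ Finset.range p, algebraMap ℚ_[p] K (gaussCoeff ω t k) * (ζ - 1) ^ k := by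
  have hexp : ∀ σ : K ≃ₐ[ℚ_[p]] K,
      σ ζ = (ζ - 1 + 1) ^ (PadicInt.toZMod ((ω σ : ℤ_[p]ˣ) : ℤ_[p])).val := fun σ => by
    rw [hω σ, sub_add_cancel]
  simp_rw [hexp]
  rw [Finset.sum_mul_add_one_pow _ _ _ fun σ _ => ZMod.val_lt _]
  refine Finset.sum_congr rfl fun k _ => ?_
  simp [gaussCoeff]

variable [IsCyclotomicExtension {p} ℚ_[p] K]

theorem toZMod_gaussCoeff (hζ : IsPrimitiveRoot ζ p)
    (hω : ∀ σ : K ≃ₐ[ℚ_[p]] K, σ ζ = ζ ^ (PadicInt.toZMod ((ω σ : ℤ_[p]ˣ) : ℤ_[p])).val)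
    (t k : ℕ) :
    PadicInt.toZMod (gaussCoeff ω t k) =
      ∑ b : (ZMod p)ˣ, (b : ZMod p)⁻¹ ^ t * ((b : ZMod p).val.choose k : ZMod p) := by
  have hbij := hζ.bijective_of_apply_eq_pow
    (irreducible_cyclotomic_of_prime ℚ_[p] PadicInt.prime_p)
    (m := fun σ => Units.map PadicInt.toZMod.toMonoidHom (ω σ)) hω
  rw [gaussCoeff, map_sum]
  refine Fintype.sum_bijective _ hbij _ _ fun σ => ?_
  simp [map_units_inv]

theorem norm_gaussCoeff_le_of_lt (hζ : IsPrimitiveRoot ζ p)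
    (hω : ∀ σ : K ≃ₐ[ℚ_[p]] K, σ ζ = ζ ^ (PadicInt.toZMod ((ω σ : ℤ_[p]ˣ) : ℤ_[p])).val)
    {t k : ℕ} (hk : k < t) (ht : t + 1 < p) : ‖gaussCoeff ω t k‖ ≤ (p : ℝ)⁻¹ := by
  have hfac : (k ! : ZMod p) ≠ 0 := by
    rw [Ne, ZMod.natCast_eq_zero_iff, (Fact.out : p.Prime).dvd_factorial]
    omega
  have h := ZMod.factorial_mul_sum_units_inv_pow_mul_choose hk.le ht
  rw [if_neg hk.ne, ← toZMod_gaussCoeff hζ hω] at h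
  exact PadicInt.toZMod_eq_zero_iff_norm_le.1 ((mul_eq_zero.1 h).resolve_left hfac)

theorem norm_gaussCoeff_self (hζ : IsPrimitiveRoot ζ p)
    (hω : ∀ σ : K ≃ₐ[ℚ_[p]] K, σ ζ = ζ ^ (PadicInt.toZMod ((ω σ : ℤ_[p]ˣ) : ℤ_[p])).val)
    {t : ℕ} (ht : t + 1 < p) : ‖gaussCoeff ω t t‖ = 1 := by
  have h := ZMod.factorial_mul_sum_units_inv_pow_mul_choose le_rfl ht
  rw [if_pos rfl, ← toZMod_gaussCoeff hζ hω] at h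
  exact PadicInt.norm_eq_one_iff_toZMod_ne_zero.2 <|
    right_ne_zero_of_mul (h ▸ neg_ne_zero.2 one_ne_zero)

end GaussSum

theorem gauss_sum_valuation_general (p : ℕ) [Fact p.Prime]
    (K : Type*) [NormedField K] [Algebra ℚ_[p] K] [FiniteDimensional ℚ_[p] K]
    (hiso : ∀ x : ℚ_[p], ‖algebraMap ℚ_[p] K x‖ = ‖x‖)
    (hcyc : IsCyclotomicExtension {p} ℚ_[p] K)
    (ζ : K) (hζ : IsPrimitiveRoot ζ p)
    (ω : (K ≃ₐ[ℚ_[p]] K) →* ℤ_[p]ˣ)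
    (hω : ∀ σ : K ≃ₐ[ℚ_[p]] K, σ ζ = ζ ^ (PadicInt.toZMod ((ω σ : ℤ_[p]ˣ) : ℤ_[p])).val)
    (t : ℕ) (ht2 : t ≤ p - 2) :
    ‖((p : K) - 1)⁻¹ * ∑ σ : K ≃ₐ[ℚ_[p]] K,
        algebraMap ℚ_[p] K (((((ω σ)⁻¹ : ℤ_[p]ˣ) : ℤ_[p]) : ℚ_[p]) ^ t) * σ ζ‖
      = ‖ζ - 1‖ ^ t := by
  have hp2 := (Fact.out : p.Prime).two_le
  have : IsUltrametricDist K := .of_norm_algebraMap_eq hiso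
  have hnorm_p : ‖(p : K)‖ = (p : ℝ)⁻¹ := by
    rw [← map_natCast (algebraMap ℚ_[p] K), hiso, Padic.norm_p]
  have hp_inv_lt : (p : ℝ)⁻¹ < 1 := inv_lt_one_of_one_lt₀ (by exact_mod_cast hp2)
  have hπ0 : ζ - 1 ≠ 0 := sub_ne_zero.2 (hζ.ne_one (by omega))
  have hπ : ‖ζ - 1‖ ^ (p - 1) = (p : ℝ)⁻¹ := by
    rw [← Nat.totient_prime Fact.out, hζ.norm_sub_one_pow_totient, eval_one_cyclotomic_prime,
      hnorm_p]
  have hπ1 : ‖ζ - 1‖ < 1 := lt_of_pow_lt_pow_left₀ (p - 1) zero_le_one (by rwa [hπ, one_pow])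
  have hunit : ‖(p : K) - 1‖ = 1 := IsUltrametricDist.norm_sub_one_eq_one (hnorm_p ▸ hp_inv_lt)
  have hcoe : ∀ x : ℤ_[p], ‖algebraMap ℚ_[p] K x‖ = ‖x‖ := fun x => hiso x
  rw [norm_mul, norm_inv, hunit, inv_one, one_mul, sum_mul_apply_eq_sum_gaussCoeff_mul_pow hω]
  refine IsUltrametricDist.norm_sum_range_mul_pow_eq (by omega) hπ0 hπ1 (fun k => ?_) ?_
    (fun k hk => ?_)
  · rw [hcoe]; exact PadicInt.norm_le_one _
  · rw [hcoe, norm_gaussCoeff_self hζ hω (by omega)]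
  · rw [hcoe]
    calc ‖gaussCoeff ω t k‖ ≤ ‖ζ - 1‖ ^ (p - 1) := hπ ▸ norm_gaussCoeff_le_of_lt hζ hω hk (by omega)
      _ < ‖ζ - 1‖ ^ (t - k) := pow_lt_pow_right_of_lt_one₀ (norm_pos_iff.2 hπ0) hπ1 (by omega)

/-- Gauss sum valuation: let `p` be an odd prime, `K = ℚ_p(ζ_p)` with its (unique) norm
extending that of `ℚ_p`, `Δ = Gal(K/ℚ_p)` with Teichmüller/cyclotomic character `ω`.
For `1 ≤ t ≤ p-2`, the Gauss sum `G(t) = (1/(p-1)) ∑_{σ∈Δ} ω^{-t}(σ) ζ_p^σ` has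
`𝔓`-adic valuation `t`, i.e. `‖G(t)‖ = ‖ζ_p - 1‖^t`. -/
theorem gauss_sum_valuation (p : ℕ) [Fact p.Prime] (hp : Odd p)
    (K : Type*) [NormedField K] [Algebra ℚ_[p] K] [FiniteDimensional ℚ_[p] K]
    (hiso : ∀ x : ℚ_[p], ‖algebraMap ℚ_[p] K x‖ = ‖x‖)
    (hcyc : IsCyclotomicExtension {p} ℚ_[p] K)
    (ζ : K) (hζ : IsPrimitiveRoot ζ p)
    (ω : (K ≃ₐ[ℚ_[p]] K) →* ℤ_[p]ˣ)
    (hω : ∀ σ : K ≃ₐ[ℚ_[p]] K, σ ζ = ζ ^ (PadicInt.toZMod ((ω σ : ℤ_[p]ˣ) : ℤ_[p])).val)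
    (t : ℕ) (ht1 : 1 ≤ t) (ht2 : t ≤ p - 2) :
    ‖((p : K) - 1)⁻¹ * ∑ σ : K ≃ₐ[ℚ_[p]] K,
        algebraMap ℚ_[p] K (((((ω σ)⁻¹ : ℤ_[p]ˣ) : ℤ_[p]) : ℚ_[p]) ^ t) * σ ζ‖
      = ‖ζ - 1‖ ^ t :=
  gauss_sum_valuation_general p K hiso hcyc ζ hζ ω hω t ht2
end
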